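/- Suppose (Z,Z') is a pair of t-deep history ensembles satisfying the support criterion that for every customer j and round k ≤ t, there is l ≤ k with dig(Z'_{1j}^l) ≽ dig(Z_{1j}^k), and for every product i ≠ 1 there is l ≤ k with dig(Z_{ij}^l) = dig(Z'_{ij}^k). Then for every round k: Ω_1(Z',A,k) ≥ Ω_1(Z,A,k) and Ω_i(Z',A,k) ≤ Ω_i(Z,A,k) for all i ≠ 1. -/

import Mathlib

/-- Round outcomes: success, no consumption, failure. -/
inductive Ev : Type
  | S : Ev
  | N : Ev
  | F : Ev
deriving DecidableEq

instance : Fintype Ev := ⟨{Ev.S, Ev.N, Ev.F}, fun x => by cases x <;> simp⟩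

/-- A history is a finite sequence of round outcomes. -/
abbrev Hist := List Ev

/-- The digest of a history: the subsequence of non-`N` entries. -/
def dig (Z : Hist) : Hist := Z.filter (fun v => v ≠ Ev.N)

/-- Consumption: the number of non-`N` entries. -/
def con (Z : Hist) : ℕ := (dig Z).length

/-- Number of successes. -/
def Scount (Z : Hist) : ℕ := (Z.filter (fun v => v = Ev.S)).length

/-- Number of failures. -/
def Fcount (Z : Hist) : ℕ := (Z.filter (fun v => v = Ev.F)).length

/-- `Superior Z1 Z2` : equal depth, equal consumption, and no digest index
where `Z1` has `F` while `Z2` has `S`. -/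
def Superior (Z1 Z2 : Hist) : Prop :=
  Z1.length = Z2.length ∧ con Z1 = con Z2 ∧
    ∀ i : ℕ, ¬ ((dig Z1)[i]? = some Ev.F ∧ (dig Z2)[i]? = some Ev.S)

/-- Helper for the ex-ante function: current prefix, remaining events. -/
def exAnteFrom (σ : Hist → ℝ) : Hist → Hist → ℝ
  | _, [] => 1
  | pre, v :: rest =>
      (if v = Ev.N then 1 - σ pre else σ pre) * exAnteFrom σ (pre ++ [v]) rest

/-- The ex-ante function `c` of a partiality strategy `σ`:
`c(empty)=1`, `c(ZV)=σ(Z)c(Z)` for `V∈{S,F}`, `c(ZN)=(1-σ(Z))c(Z)`. -/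
def exAnte (σ : Hist → ℝ) (Z : Hist) : ℝ := exAnteFrom σ [] Z

/-- Probability of a full history under the Markov chain with quality `q`. -/
def histProb (σ : Hist → ℝ) (q : ℝ) (Z : Hist) : ℝ :=
  exAnte σ Z * q ^ Scount Z * (1 - q) ^ Fcount Z

/-- A strategy takes values in `[0,1]`. -/
def ValidStrat (σ : Hist → ℝ) : Prop := ∀ Z, σ Z ∈ Set.Icc (0 : ℝ) 1

/-- A monotone partiality strategy. -/
def MonotoneStrat (σ : Hist → ℝ) : Prop :=
  ∀ Z1 Z2, Superior Z1 Z2 → σ Z2 ≤ σ Z1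

/-- A `t`-deep history ensemble: a history for each product `i ∈ [m]` and
customer `j ∈ [n]`. -/
abbrev Ens (m n t : ℕ) := Fin m → Fin n → Fin t → Ev

/-- Market share of product `i` after round `k`, with initial shares `A`. -/
def shareAt {m n t : ℕ} (Z : Ens m n t) (A : Fin m → ℕ) (k : ℕ) (i : Fin m) : ℕ :=
  A i + ∑ j : Fin n, con ((List.ofFn (Z i j)).take k)

/-- Probability of a history ensemble: at round `k+1`, customer `j` consumes
product `i` with probability `σ i j` applied to her history with `i` and the
round-`k` market-share vector; consumption is a success with probability `q i`. -/
def ensProb {m n t : ℕ} (σ : Fin m → Fin n → Hist → (Fin m → ℕ) → ℝ)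
    (q : Fin m → ℝ) (A : Fin m → ℕ) (Z : Ens m n t) : ℝ :=
  ∏ i : Fin m, ∏ j : Fin n, ∏ k : Fin t,
    (match Z i j k with
      | Ev.N => 1 - σ i j ((List.ofFn (Z i j)).take k) (shareAt Z A k)
      | Ev.S => q i * σ i j ((List.ofFn (Z i j)).take k) (shareAt Z A k)
      | Ev.F => (1 - q i) * σ i j ((List.ofFn (Z i j)).take k) (shareAt Z A k))

/-- Monotonicity in history, for fixed market-share vector. -/
def MonotoneStratMS {m : ℕ} (σ : Hist → (Fin m → ℕ) → ℝ) : Prop :=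
  ∀ (ω : Fin m → ℕ) (Z1 Z2 : Hist), Superior Z1 Z2 → σ Z2 ω ≤ σ Z1 ω

/-- Weak herding for product `i`: the strategy is non-decreasing in `ω i` and
independent of the other coordinates of the market-share vector. -/
def WeaklyHerding {m : ℕ} (i : Fin m) (σ : Hist → (Fin m → ℕ) → ℝ) : Prop :=
  ∀ (Z : Hist) (ω ω' : Fin m → ℕ), ω i ≤ ω' i → σ Z ω ≤ σ Z ω'

/-- Competitive weak herding for product `i`: non-decreasing in `ω i` and
non-increasing in `ω k` for every `k ≠ i`. -/
def CompWeaklyHerding {m : ℕ} (i : Fin m) (σ : Hist → (Fin m → ℕ) → ℝ) : Prop :=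
  ∀ (Z : Hist) (ω ω' : Fin m → ℕ), ω i ≤ ω' i →
    (∀ k, k ≠ i → ω' k ≤ ω k) → σ Z ω ≤ σ Z ω'

/-- Digest superiority: equal consumption and no digest index with `F` in the
first history and `S` in the second. -/
def DigSuperior (W V : Hist) : Prop :=
  con W = con V ∧
    ∀ i : ℕ, ¬ ((dig W)[i]? = some Ev.F ∧ (dig V)[i]? = some Ev.S)

lemma con_take_mono (L : Hist) {a b : ℕ} (h : a ≤ b) :
    con (L.take a) ≤ con (L.take b) := by
  have : L.take a = (L.take b).take a := by rw [List.take_take, Nat.min_eq_left h]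
  rw [this]
  exact List.Sublist.length_le (List.Sublist.filter _ (List.take_sublist _ _))

/-- the ensemble support criterion implies the market-share
comparisons: product `p₁`'s share weakly increases from `Z` to `Z'`, while each
other product's share weakly decreases. -/
theorem support_criterion_share_order (m n t : ℕ) (p₁ : Fin m) (A : Fin m → ℕ)
    (Z Z' : Ens m n t)
    (hcrit : ∀ (j : Fin n) (k : ℕ), 0 < k → k ≤ t →
      (∃ l, 0 < l ∧ l ≤ k ∧
        DigSuperior ((List.ofFn (Z' p₁ j)).take l) ((List.ofFn (Z p₁ j)).take k)) ∧
      (∀ i, i ≠ p₁ → ∃ l, 0 < l ∧ l ≤ k ∧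
        dig ((List.ofFn (Z i j)).take l) = dig ((List.ofFn (Z' i j)).take k))) :
    ∀ k ≤ t, shareAt Z A k p₁ ≤ shareAt Z' A k p₁ ∧
      ∀ i, i ≠ p₁ → shareAt Z' A k i ≤ shareAt Z A k i := by
  intro k hk
  rcases Nat.eq_zero_or_pos k with rfl | hk0
  · constructor
    · simp [shareAt, con, dig]
    · intro i _; simp [shareAt, con, dig]
  constructor
  · unfold shareAt
    refine Nat.add_le_add_left (Finset.sum_le_sum fun j _ => ?_) _
    obtain ⟨⟨l, _, hlk, hcon, _⟩, _⟩ := hcrit j k hk0 hk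
    calc con ((List.ofFn (Z p₁ j)).take k) = con ((List.ofFn (Z' p₁ j)).take l) := hcon.symm
      _ ≤ con ((List.ofFn (Z' p₁ j)).take k) := con_take_mono _ hlk
  · intro i hi
    unfold shareAt
    refine Nat.add_le_add_left (Finset.sum_le_sum fun j _ => ?_) _
    obtain ⟨_, h2⟩ := hcrit j k hk0 hk
    obtain ⟨l, _, hlk, hdig⟩ := h2 i hi
    calc con ((List.ofFn (Z' i j)).take k) = con ((List.ofFn (Z i j)).take l) := by
          unfold con; rw [hdig]
      _ ≤ con ((List.ofFn (Z i j)).take k) := con_take_mono _ hlk
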